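/- arXiv:1109.2260 — 4 statements merged into one kernel-verified Lean document; each statement's English description precedes it below -/
import Mathlib

section
/- Let v : [0,∞) → ℝ be a C^∞ function with v(0)=v'(0)=0 whose second derivative v'' is non-increasing, identically 2 on [0,1] and identically 0 on [2,∞). Then for all a ≥ 1 and t ≥ 0, v(a·t) ≤ a²·v(t). -/
/-- For the same function `v` (smooth, `v 0 = v' 0 = 0`, `v''` non-increasing,
`≡ 2` on `[0,1]`, `≡ 0` on `[2,∞)`), one has `v (a * t) ≤ a ^ 2 * v t` for all
`a ≥ 1` and `t ≥ 0`. -/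
theorem stmt2 (v : ℝ → ℝ) (hsmooth : ContDiff ℝ (⊤ : ℕ∞) v)
    (h0 : v 0 = 0) (h0' : deriv v 0 = 0)
    (hanti : AntitoneOn (deriv (deriv v)) (Set.Ici 0))
    (h2a : ∀ t ∈ Set.Icc (0:ℝ) 1, deriv (deriv v) t = 2)
    (h2b : ∀ t : ℝ, 2 ≤ t → deriv (deriv v) t = 0) :
    ∀ a : ℝ, 1 ≤ a → ∀ t : ℝ, 0 ≤ t → v (a * t) ≤ a ^ 2 * v t := by
  have hv : Differentiable ℝ v := hsmooth.differentiable (by simp)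
  have hdv : Differentiable ℝ (deriv v) := by
    have h1 : ContDiff ℝ (↑(⊤:ℕ∞)) v := hsmooth.of_le (by exact_mod_cast le_top)
    exact (contDiff_infty_iff_deriv.mp h1).2.differentiable (by simp)
  -- claim1 : s * v''(s) ≤ v'(s) on [0,∞)
  have claim1 : ∀ s : ℝ, 0 ≤ s → s * deriv (deriv v) s ≤ deriv v s := by
    intro s hs
    rcases eq_or_lt_of_le hs with h | h
    · simp [← h, h0']
    · obtain ⟨c, hc, hderiv⟩ := exists_deriv_eq_slope (deriv v) h
        hdv.continuous.continuousOn hdv.differentiableOn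
      have hcc : deriv (deriv v) s ≤ deriv (deriv v) c :=
        hanti (Set.mem_Ici.mpr hc.1.le) (Set.mem_Ici.mpr hs) hc.2.le
      have : deriv v s = s * deriv (deriv v) c := by
        field_simp [h0'] at hderiv
        linarith [hderiv]
      nlinarith
  -- key : s * v'(s) ≤ 2 * v(s) on [0,∞)
  have key : ∀ s : ℝ, 0 ≤ s → s * deriv v s ≤ 2 * v s := by
    set g : ℝ → ℝ := fun s => 2 * v s - s * deriv v s with hg
    have hgd : ∀ x : ℝ, HasDerivAt g (deriv v x - x * deriv (deriv v) x) x := by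
      intro x
      have h1 : HasDerivAt (fun s => 2 * v s) (2 * deriv v x) x :=
        ((hv x).hasDerivAt).const_mul 2
      have h2 : HasDerivAt (fun s => s * deriv v s)
          (1 * deriv v x + x * deriv (deriv v) x) x :=
        (hasDerivAt_id x).mul ((hdv x).hasDerivAt)
      have := h1.sub h2
      refine this.congr_deriv ?_
      ring
    have hmono : MonotoneOn g (Set.Ici 0) := by
      apply monotoneOn_of_deriv_nonneg (convex_Ici 0)
        (fun x _ => ((hgd x).differentiableAt.continuousAt.continuousWithinAt))
        (fun x _ => ((hgd x).differentiableAt.differentiableWithinAt))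
      intro x hx
      rw [interior_Ici] at hx
      rw [(hgd x).deriv]
      have := claim1 x (le_of_lt hx)
      linarith
    intro s hs
    have h := hmono (Set.self_mem_Ici) (Set.mem_Ici.mpr hs) hs
    simp only [hg, h0, h0'] at h
    simp at h
    linarith
  intro a ha t ht
  rcases eq_or_lt_of_le ht with h | htpos
  · simp [← h, h0]
  set G : ℝ → ℝ := fun a => v (a * t) / a ^ 2 with hG
  have hGd : ∀ x : ℝ, 0 < x → HasDerivAt G
      ((deriv v (x * t) * t * x ^ 2 - v (x * t) * (2 * x)) / (x ^ 2) ^ 2) x := by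
    intro x hx
    have h1 : HasDerivAt (fun a : ℝ => v (a * t)) (deriv v (x * t) * t) x := by
      have hin : HasDerivAt (fun a : ℝ => a * t) t x := by
        simpa using (hasDerivAt_id x).mul_const t
      exact ((hv (x * t)).hasDerivAt).comp x hin
    have h2 : HasDerivAt (fun a : ℝ => a ^ 2) (2 * x) x := by
      simpa using hasDerivAt_pow 2 x
    exact h1.div h2 (by positivity)
  have hantiG : AntitoneOn G (Set.Ici 1) := by
    apply antitoneOn_of_deriv_nonpos (convex_Ici 1)
    · intro x hx
      exact ((hGd x (lt_of_lt_of_le one_pos hx)).differentiableAt.continuousAt.continuousWithinAt)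
    · intro x hx
      rw [interior_Ici] at hx
      exact ((hGd x (lt_trans one_pos hx)).differentiableAt.differentiableWithinAt)
    · intro x hx
      rw [interior_Ici] at hx
      have hxpos : (0:ℝ) < x := lt_trans one_pos hx
      rw [(hGd x hxpos).deriv]
      apply div_nonpos_of_nonpos_of_nonneg _ (by positivity)
      have hk := key (x * t) (by positivity)
      nlinarith
  have hle : G a ≤ G 1 := hantiG Set.self_mem_Ici (Set.mem_Ici.mpr ha) ha
  have hG1 : G 1 = v t := by simp [hG]
  have hGa : G a = v (a * t) / a ^ 2 := rfl
  rw [hG1, hGa] at hle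
  have hapos : (0:ℝ) < a ^ 2 := by positivity
  rw [div_le_iff₀ hapos] at hle
  linarith [hle]
end

section
/- Let μ be a finite positive measure on ℝ² with total mass 2m and growth bound μ(D(x,r)) ≤ C₃ r^s for all disks, where s ∈ (1,2). Let (T_j = D(c_j,r_j)) be a finite family of disks with ∑_j r_j^s ≤ H, and set T̃_j = T_j \ ∪_{i<j} T_i. For A ≥ 2 define the Marcinkiewicz function g_A = A^{−s} ∑_j (μ(T̃_j)/r_j^s)·χ_{A T_j}. Then ∫ g_A² dμ ≤ C·m for a constant C depending only on s and C₃, uniformly in A. -/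
/-!
Expand `g_A²` as a double sum over pairs of dilated disks `A T_j`, `A T_k`; by symmetry it is
enough (at the cost of a factor 2) to keep the pairs with `r_k ≤ r_j`. For such a pair the growth
bound `μ(A T_k) ≤ C₃ (A r_k)^s` cancels the weight of `k` down to `C₃ μ(T̃_k)`, and every `T̃_k`
with `A T_k` meeting `A T_j` lies in `3A T_j`; by disjointness of the `T̃_k` these contribute at
most `C₃² (3A r_j)^s`, which cancels the weight of `j` down to `3^s C₃² μ(T̃_j)`. Summing over the
disjoint `T̃_j` gives `∫ g_A² dμ ≤ 2·3^s C₃² μ(ℝ²) = 4·3^s C₃² m`.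
-/

open MeasureTheory Metric Finset

theorem integral_sq_sum_mul_indicator {α ι : Type*} [MeasurableSpace α] [Fintype ι]
    (μ : Measure α) [IsFiniteMeasure μ] {E : ι → Set α} (hE : ∀ j, MeasurableSet (E j))
    (w : ι → ℝ) :
    ∫ x, (∑ j, w j * (E j).indicator (fun _ => (1 : ℝ)) x) ^ 2 ∂μ
      = ∑ j, ∑ k, w j * w k * μ.real (E j ∩ E k) := by
  have hpoint : ∀ x, (∑ j, w j * (E j).indicator (fun _ => (1 : ℝ)) x) ^ 2
      = ∑ j, ∑ k, w j * w k * (E j ∩ E k).indicator (fun _ => (1 : ℝ)) x := by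
    intro x
    rw [sq, sum_mul_sum]
    refine sum_congr rfl fun j _ => sum_congr rfl fun k _ => ?_
    by_cases hj : x ∈ E j <;> by_cases hk : x ∈ E k <;> simp [hj, hk]
  have hint : ∀ j k,
      Integrable (fun x => w j * w k * (E j ∩ E k).indicator (fun _ => (1 : ℝ)) x) μ :=
    fun j k => ((integrable_const 1).indicator ((hE j).inter (hE k))).const_mul _
  simp_rw [hpoint]
  rw [integral_finsetSum _ fun j _ => integrable_finsetSum _ fun k _ => hint j k]
  refine sum_congr rfl fun j _ => ?_
  rw [integral_finsetSum _ fun k _ => hint j k]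
  refine sum_congr rfl fun k _ => ?_
  rw [integral_const_mul, integral_indicator_const _ ((hE j).inter (hE k)), smul_eq_mul, mul_one]

theorem sum_sum_le_two_mul_sum_sum_filter_le {ι β : Type*} [Fintype ι] [LinearOrder β]
    (f : ι → ι → ℝ) (hf : ∀ j k, 0 ≤ f j k) (hsymm : ∀ j k, f j k = f k j) (r : ι → β) :
    ∑ j, ∑ k, f j k ≤ 2 * ∑ j, ∑ k with r k ≤ r j, f j k := by
  have hsplit : ∀ j k, f j k
      ≤ (if r k ≤ r j then f j k else 0) + (if r j ≤ r k then f j k else 0) := by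
    intro j k
    rcases le_total (r k) (r j) with h | h <;> split_ifs <;> linarith [hf j k]
  have hswap : ∑ j, ∑ k, (if r j ≤ r k then f j k else 0)
      = ∑ j, ∑ k, (if r k ≤ r j then f j k else 0) := by
    rw [sum_comm]
    simp_rw [hsymm]
  calc ∑ j, ∑ k, f j k
      ≤ ∑ j, ∑ k, ((if r k ≤ r j then f j k else 0) + (if r j ≤ r k then f j k else 0)) := by
        gcongr with j _ k _; exact hsplit j k
    _ = 2 * ∑ j, ∑ k with r k ≤ r j, f j k := by
        simp only [sum_add_distrib, hswap, sum_filter]; ring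

theorem closedBall_subset_closedBall_three_mul_of_inter_nonempty {α : Type*}
    [PseudoMetricSpace α] {x y : α} {a b A : ℝ} (hA : 1 ≤ A) (hba : b ≤ a)
    (h : (closedBall x (A * a) ∩ closedBall y (A * b)).Nonempty) :
    closedBall y b ⊆ closedBall x (3 * A * a) := by
  obtain ⟨z, hzx, hzy⟩ := h
  intro w hw
  rw [mem_closedBall] at hzx hzy hw ⊢
  have hb : 0 ≤ b := by nlinarith [dist_nonneg (x := z) (y := y)]
  have := dist_triangle4 w y z x
  rw [dist_comm y z] at this
  nlinarith

theorem disjointed_eq_diff_iUnion_lt {ι α : Type*} [Preorder ι] [LocallyFiniteOrderBot ι]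
    (f : ι → Set α) (j : ι) : disjointed f j = f j \ ⋃ i < j, f i := by
  simp [disjointed_apply, sup_set_eq_biUnion]

section Growth

open scoped Function

variable {α ι : Type*} [PseudoMetricSpace α] [MeasurableSpace α] [Fintype ι]
  {μ : Measure α} [IsFiniteMeasure μ] {C s A : ℝ} {c : ι → α} {r : ι → ℝ} {T : ι → Set α}

open Classical in
theorem sum_measureReal_le_of_inter_nonempty
    (hgrowth : ∀ x ρ, 0 < ρ → μ.real (closedBall x ρ) ≤ C * ρ ^ s)
    (hr : ∀ j, 0 < r j) (hA : 1 ≤ A) (hT : ∀ j, MeasurableSet (T j))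
    (hTsub : ∀ j, T j ⊆ closedBall (c j) (r j)) (hTdisj : Pairwise (Disjoint on T)) (j : ι) :
    ∑ k with r k ≤ r j ∧ (closedBall (c j) (A * r j) ∩ closedBall (c k) (A * r k)).Nonempty,
        μ.real (T k) ≤ C * (3 * A * r j) ^ s := by
  have hsub : ∀ k ∈ univ.filter fun k =>
      r k ≤ r j ∧ (closedBall (c j) (A * r j) ∩ closedBall (c k) (A * r k)).Nonempty,
      T k ⊆ closedBall (c j) (3 * A * r j) := fun k hk => by
    rw [mem_filter] at hk
    exact (hTsub k).trans
      (closedBall_subset_closedBall_three_mul_of_inter_nonempty hA hk.2.1 hk.2.2)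
  rw [← measureReal_biUnion_finset (fun k _ l _ hkl => hTdisj hkl) fun k _ => hT k]
  exact (measureReal_mono (Set.iUnion₂_subset hsub)).trans
    (hgrowth (c j) _ (by have := hr j; positivity))

theorem integral_sq_marcinkiewicz_le [OpensMeasurableSpace α] (hC : 0 ≤ C)
    (hgrowth : ∀ x ρ, 0 < ρ → μ.real (closedBall x ρ) ≤ C * ρ ^ s)
    (hr : ∀ j, 0 < r j) (hA : 1 ≤ A) (hT : ∀ j, MeasurableSet (T j))
    (hTsub : ∀ j, T j ⊆ closedBall (c j) (r j)) (hTdisj : Pairwise (Disjoint on T)) :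
    ∫ x, (A ^ (-s) * ∑ j, μ.real (T j) / r j ^ s *
        (closedBall (c j) (A * r j)).indicator (fun _ => (1 : ℝ)) x) ^ 2 ∂μ
      ≤ 2 * 3 ^ s * C ^ 2 * μ.real Set.univ := by
  classical
  have hA0 : 0 < A := one_pos.trans_le hA
  set E : ι → Set α := fun k => closedBall (c k) (A * r k)
  set w : ι → ℝ := fun k => A ^ (-s) * (μ.real (T k) / r k ^ s)
  have hw0 : ∀ k, 0 ≤ w k := fun k => by have := hr k; positivity
  have hw : ∀ k, w k * (A * r k) ^ s = μ.real (T k) := fun k => by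
    have hrs : r k ^ s ≠ 0 := (Real.rpow_pos_of_pos (hr k) s).ne'
    have hAs : A ^ s ≠ 0 := (Real.rpow_pos_of_pos hA0 s).ne'
    simp only [w]
    rw [Real.mul_rpow hA0.le (hr k).le, Real.rpow_neg hA0.le]
    field_simp
  have hterm : ∀ j k, w k * μ.real (E j ∩ E k) ≤ C * μ.real (T k) := fun j k =>
    calc w k * μ.real (E j ∩ E k) ≤ w k * (C * (A * r k) ^ s) := by
          gcongr
          · exact hw0 k
          · exact (measureReal_mono Set.inter_subset_right).trans
              (hgrowth _ _ (mul_pos hA0 (hr k)))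
      _ = C * μ.real (T k) := by rw [← hw k]; ring
  have hrow : ∀ j, ∑ k with r k ≤ r j, w j * w k * μ.real (E j ∩ E k)
      ≤ 3 ^ s * C ^ 2 * μ.real (T j) := fun j =>
    calc ∑ k with r k ≤ r j, w j * w k * μ.real (E j ∩ E k)
        = w j * ∑ k with r k ≤ r j ∧ (E j ∩ E k).Nonempty, w k * μ.real (E j ∩ E k) := by
          rw [mul_sum, ← filter_filter, sum_filter (fun k => (E j ∩ E k).Nonempty)]
          refine sum_congr rfl fun k _ => ?_
          split_ifs with h
          · ring
          · simp [Set.not_nonempty_iff_eq_empty.mp h]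
      _ ≤ w j * ∑ k with r k ≤ r j ∧ (E j ∩ E k).Nonempty, C * μ.real (T k) :=
          mul_le_mul_of_nonneg_left (sum_le_sum fun k _ => hterm j k) (hw0 j)
      _ ≤ w j * (C * (C * (3 * A * r j) ^ s)) := by
          rw [← mul_sum]
          gcongr
          · exact hw0 j
          · exact sum_measureReal_le_of_inter_nonempty hgrowth hr hA hT hTsub hTdisj j
      _ = 3 ^ s * C ^ 2 * μ.real (T j) := by
          rw [← hw j, mul_assoc 3 A, Real.mul_rpow (by norm_num) (mul_pos hA0 (hr j)).le]
          ring
  have hsymm : ∀ j k, w j * w k * μ.real (E j ∩ E k) = w k * w j * μ.real (E k ∩ E j) :=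
    fun j k => by rw [mul_comm (w j), Set.inter_comm]
  calc ∫ x, (A ^ (-s) * ∑ j, μ.real (T j) / r j ^ s *
          (E j).indicator (fun _ => (1 : ℝ)) x) ^ 2 ∂μ
      = ∫ x, (∑ j, w j * (E j).indicator (fun _ => (1 : ℝ)) x) ^ 2 ∂μ := by
        simp_rw [w, mul_sum, mul_assoc]
    _ = ∑ j, ∑ k, w j * w k * μ.real (E j ∩ E k) :=
        integral_sq_sum_mul_indicator μ (fun k => measurableSet_closedBall) w
    _ ≤ 2 * ∑ j, ∑ k with r k ≤ r j, w j * w k * μ.real (E j ∩ E k) :=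
        sum_sum_le_two_mul_sum_sum_filter_le _ (fun j k => by
          have := hw0 j; have := hw0 k; positivity) hsymm r
    _ ≤ 2 * ∑ j, 3 ^ s * C ^ 2 * μ.real (T j) := by gcongr with j; exact hrow j
    _ = 2 * 3 ^ s * C ^ 2 * ∑ j, μ.real (T j) := by rw [← mul_sum]; ring
    _ ≤ 2 * 3 ^ s * C ^ 2 * μ.real Set.univ := by
        gcongr
        exact sum_measureReal_le_measureReal_univ (fun j _ => hT j) fun j _ k _ hjk => hTdisj hjk

end Growth

theorem stmt9_general (s C₃ : ℝ) (hC₃ : 0 < C₃) :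
    ∃ C > 0, ∀ (μ : Measure (EuclideanSpace ℝ (Fin 2))) (m H : ℝ) (n : ℕ)
      (c : Fin n → EuclideanSpace ℝ (Fin 2)) (r : Fin n → ℝ),
      μ Set.univ < ⊤ → 0 < m → (μ Set.univ).toReal = 2 * m →
      (∀ (x : EuclideanSpace ℝ (Fin 2)) (ρ : ℝ), 0 < ρ →
        (μ (Metric.closedBall x ρ)).toReal ≤ C₃ * ρ ^ s) →
      (∀ j, 0 < r j) → (∑ j, r j ^ s ≤ H) →
      ∀ A : ℝ, 2 ≤ A →
        ∫ x, (A ^ (-s) * ∑ j,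
            (μ (Metric.closedBall (c j) (r j) \
                ⋃ (i : Fin n) (_ : i < j), Metric.closedBall (c i) (r i))).toReal / r j ^ s *
              Set.indicator (Metric.closedBall (c j) (A * r j)) (fun _ => (1:ℝ)) x) ^ 2 ∂μ
          ≤ C * m := by
  refine ⟨4 * 3 ^ s * C₃ ^ 2, by positivity, ?_⟩
  intro μ m H n c r hfin _ hmass hgrowth hr _ A hA
  have : IsFiniteMeasure μ := ⟨hfin⟩
  set B : Fin n → Set (EuclideanSpace ℝ (Fin 2)) := fun i => closedBall (c i) (r i)
  have hbound := integral_sq_marcinkiewicz_le hC₃.le hgrowth hr (by linarith) (T := disjointed B)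
    (fun j => disjointedRec (fun _ _ ht => ht.diff measurableSet_closedBall)
      measurableSet_closedBall)
    (disjointed_subset B) (disjoint_disjointed B)
  simp only [disjointed_eq_diff_iUnion_lt] at hbound
  calc _ ≤ 2 * 3 ^ s * C₃ ^ 2 * μ.real Set.univ := hbound
    _ = 4 * 3 ^ s * C₃ ^ 2 * m := by rw [measureReal_def, hmass]; ring

/-- Let `μ` be a finite positive measure on `ℝ²` of total mass `2m` with growth
bound `μ(D(x,ρ)) ≤ C₃ ρ^s`, `s ∈ (1,2)`. Let `T_j = D(c_j, r_j)` be finitely many disks with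
`∑ r_j ^ s ≤ H`, `T̃_j = T_j \ ∪_{i<j} T_i`, and for `A ≥ 2` let
`g_A = A^{-s} ∑_j (μ(T̃_j)/r_j^s) χ_{A T_j}`. Then `∫ g_A ² dμ ≤ C m` with `C = C(s, C₃)`,
uniformly in `A`. -/
theorem stmt9 (s C₃ : ℝ) (hs : 1 < s ∧ s < 2) (hC₃ : 0 < C₃) :
    ∃ C > 0, ∀ (μ : Measure (EuclideanSpace ℝ (Fin 2))) (m H : ℝ) (n : ℕ)
      (c : Fin n → EuclideanSpace ℝ (Fin 2)) (r : Fin n → ℝ),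
      μ Set.univ < ⊤ → 0 < m → (μ Set.univ).toReal = 2 * m →
      (∀ (x : EuclideanSpace ℝ (Fin 2)) (ρ : ℝ), 0 < ρ →
        (μ (Metric.closedBall x ρ)).toReal ≤ C₃ * ρ ^ s) →
      (∀ j, 0 < r j) → (∑ j, r j ^ s ≤ H) →
      ∀ A : ℝ, 2 ≤ A →
        ∫ x, (A ^ (-s) * ∑ j,
            (μ (Metric.closedBall (c j) (r j) \
                ⋃ (i : Fin n) (_ : i < j), Metric.closedBall (c i) (r i))).toReal / r j ^ s *
              Set.indicator (Metric.closedBall (c j) (A * r j)) (fun _ => (1:ℝ)) x) ^ 2 ∂μ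
          ≤ C * m :=
  stmt9_general s C₃ hC₃
end

section
/- Let ν be a finite signed measure on ℝ², let B = D(x,ρ) be a disk, and let Ω ⊂ B be a set whose distance to supp ν is at least ερ, where 0 < ε < 1. Then for any M ≥ 6 and s ∈ (1,2), the oscillation of the Riesz transform Rν over Ω satisfies osc_Ω Rν ≤ (2/(ερ)^s)·|ν|((M/3)B) + (C/M)·sup_{r>0} |ν|(D(x,r))/r^s, where C depends only on s. -/
/-! Split the integrals at the disk `(M/3)B`. Inside it every point of `supp ν` is at distance
at least `ερ` from `Ω`, where the kernel has norm at most `(ερ)^(-s)`; this gives the first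
term. Outside it `y` is far from `x'` and `x''` compared with `‖x' - x''‖ ≤ 2ρ`, so the kernel
difference is `O(ρ |y - x|^(-s-1))`, and summing the growth bound `|ν|(D(x,r)) ≤ G r^s` over
dyadic annuli gives `∫_{|y-x|>R} |y-x|^(-s-1) d|ν| ≤ 2^(s+1) G / R`, which is `O(G/M)` for
`R = Mρ/3`. -/

open MeasureTheory Metric

lemma one_sub_rpow_neg_le {p r : ℝ} (hp : 0 ≤ p) (hr : 0 < r) : 1 - r ^ (-p) ≤ p * (r - 1) := by
  have hlog : -(p * (r - 1)) ≤ Real.log r * -p := by nlinarith [Real.log_le_sub_one_of_pos hr]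
  rw [Real.rpow_def_of_pos hr]
  linarith [Real.add_one_le_exp (Real.log r * -p)]

lemma rpow_neg_sub_rpow_neg_le {p t u : ℝ} (hp : 0 ≤ p) (ht : 0 < t) (hu : 0 < u) :
    t ^ (-p) - u ^ (-p) ≤ p * (u - t) * t ^ (-(p + 1)) := by
  have hu' : u ^ (-p) = t ^ (-p) * (u / t) ^ (-p) := by
    rw [← Real.mul_rpow ht.le (div_pos hu ht).le, mul_div_cancel₀ _ ht.ne']
  have ht' : t ^ (-(p + 1)) = t ^ (-p) / t := by
    rw [neg_add, Real.rpow_add ht, Real.rpow_neg_one, div_eq_mul_inv]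
  calc t ^ (-p) - u ^ (-p) = t ^ (-p) * (1 - (u / t) ^ (-p)) := by rw [hu']; ring
    _ ≤ t ^ (-p) * (p * (u / t - 1)) := by
        gcongr; exact one_sub_rpow_neg_le hp (div_pos hu ht)
    _ = p * (u - t) * t ^ (-(p + 1)) := by rw [ht']; field_simp

section RieszKernel

variable {E : Type*} [NormedAddCommGroup E] [NormedSpace ℝ E]

noncomputable def rieszKernel (s : ℝ) (z : E) : E := ‖z‖ ^ (-(s + 1)) • z

lemma norm_rieszKernel (s : ℝ) {z : E} (hz : z ≠ 0) : ‖rieszKernel s z‖ = ‖z‖ ^ (-s) := by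
  have hpow : ‖z‖ ^ (-s) = ‖z‖ ^ (-(s + 1)) * ‖z‖ := by
    rw [← Real.rpow_add_one (norm_ne_zero_iff.mpr hz)]; ring_nf
  rw [rieszKernel, norm_smul, Real.norm_of_nonneg (by positivity), hpow]

lemma norm_rieszKernel_le {s δ : ℝ} (hs : 0 ≤ s) (hδ : 0 < δ) {z : E} (hz : δ ≤ ‖z‖) :
    ‖rieszKernel s z‖ ≤ δ ^ (-s) := by
  rw [norm_rieszKernel s (norm_pos_iff.mp (hδ.trans_le hz))]
  exact Real.rpow_le_rpow_of_nonpos hδ hz (by linarith)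

lemma norm_rieszKernel_sub_le_of_norm_le {s : ℝ} (hs : -1 ≤ s) {a b : E} (hb : 0 < ‖b‖)
    (hba : ‖b‖ ≤ ‖a‖) :
    ‖rieszKernel s a - rieszKernel s b‖ ≤ (s + 2) * ‖a - b‖ * ‖b‖ ^ (-(s + 1)) := by
  have hp : 0 ≤ s + 1 := by linarith
  have hmono : ‖a‖ ^ (-(s + 1)) ≤ ‖b‖ ^ (-(s + 1)) :=
    Real.rpow_le_rpow_of_nonpos hb hba (by linarith)
  have hdiff := rpow_neg_sub_rpow_neg_le hp hb (hb.trans_le hba)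
  have hb' : ‖b‖ ^ (-(s + 1 + 1)) * ‖b‖ = ‖b‖ ^ (-(s + 1)) := by
    rw [← Real.rpow_add_one hb.ne']; ring_nf
  have hdecomp : rieszKernel s a - rieszKernel s b
      = ‖a‖ ^ (-(s + 1)) • (a - b) - (‖b‖ ^ (-(s + 1)) - ‖a‖ ^ (-(s + 1))) • b := by
    simp only [rieszKernel, smul_sub, sub_smul]; abel
  calc ‖rieszKernel s a - rieszKernel s b‖
      ≤ ‖a‖ ^ (-(s + 1)) * ‖a - b‖ + (‖b‖ ^ (-(s + 1)) - ‖a‖ ^ (-(s + 1))) * ‖b‖ := by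
        rw [hdecomp]
        refine (norm_sub_le _ _).trans_eq ?_
        rw [norm_smul, norm_smul, Real.norm_of_nonneg (by positivity),
          Real.norm_of_nonneg (sub_nonneg.mpr hmono)]
    _ ≤ ‖b‖ ^ (-(s + 1)) * ‖a - b‖ + (s + 1) * (‖a‖ - ‖b‖) * ‖b‖ ^ (-(s + 1 + 1)) * ‖b‖ := by
        gcongr
    _ ≤ ‖b‖ ^ (-(s + 1)) * ‖a - b‖ + (s + 1) * ‖a - b‖ * ‖b‖ ^ (-(s + 1)) := by
        rw [mul_assoc _ _ ‖b‖, hb']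
        gcongr
        exact norm_sub_norm_le a b
    _ = (s + 2) * ‖a - b‖ * ‖b‖ ^ (-(s + 1)) := by ring

lemma norm_rieszKernel_sub_le {s m : ℝ} (hs : -1 ≤ s) (hm : 0 < m) {a b : E} (ha : m ≤ ‖a‖)
    (hb : m ≤ ‖b‖) :
    ‖rieszKernel s a - rieszKernel s b‖ ≤ (s + 2) * ‖a - b‖ * m ^ (-(s + 1)) := by
  wlog hba : ‖b‖ ≤ ‖a‖ generalizing a b
  · rw [norm_sub_rev, norm_sub_rev a]
    exact this hb ha (le_of_not_ge hba)
  calc ‖rieszKernel s a - rieszKernel s b‖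
      ≤ (s + 2) * ‖a - b‖ * ‖b‖ ^ (-(s + 1)) :=
        norm_rieszKernel_sub_le_of_norm_le hs (hm.trans_le hb) hba
    _ ≤ (s + 2) * ‖a - b‖ * m ^ (-(s + 1)) :=
        mul_le_mul_of_nonneg_left (Real.rpow_le_rpow_of_nonpos hm hb (by linarith))
          (mul_nonneg (by linarith) (norm_nonneg _))

end RieszKernel

lemma lintegral_compl_closedBall_dist_rpow_le {α : Type*} [PseudoMetricSpace α]
    [MeasurableSpace α] [OpensMeasurableSpace α] {μ : Measure α} {x : α} {s G R : ℝ}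
    (hs : -1 ≤ s) (hG0 : 0 ≤ G) (hR : 0 < R)
    (hG : ∀ r, 0 < r → μ (closedBall x r) ≤ ENNReal.ofReal (G * r ^ s)) :
    ∫⁻ y in (closedBall x R)ᶜ, ENNReal.ofReal (dist y x ^ (-(s + 1))) ∂μ
      ≤ ENNReal.ofReal (2 ^ (s + 1) * G / R) := by
  set c : ℕ → ℝ := fun k => (2 ^ k * R) ^ (-(s + 1))
  -- dyadic decomposition: a point with `2 ^ k * R ≤ dist y x < 2 ^ (k + 1) * R` is charged to `k`
  have hpointwise : ∀ y ∈ (closedBall x R)ᶜ, ENNReal.ofReal (dist y x ^ (-(s + 1)))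
      ≤ ∑' k, (ball x (2 ^ (k + 1) * R)).indicator (fun _ => ENNReal.ofReal (c k)) y := by
    intro y hy
    have hyR : R < dist y x := by simpa using hy
    obtain ⟨k, hk, hk1⟩ := exists_nat_pow_near ((one_le_div hR).mpr hyR.le) one_lt_two
    rw [le_div_iff₀ hR] at hk
    rw [div_lt_iff₀ hR] at hk1
    refine le_trans ?_ (ENNReal.le_tsum k)
    rw [Set.indicator_of_mem (mem_ball.mpr hk1)]
    exact ENNReal.ofReal_le_ofReal
      (Real.rpow_le_rpow_of_nonpos (by positivity) hk (by linarith))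
  have hterm : ∀ k : ℕ, ENNReal.ofReal (c k) * μ (ball x (2 ^ (k + 1) * R))
      ≤ ENNReal.ofReal (2 ^ s * G / R) * 2⁻¹ ^ k := by
    intro k
    have hrk : 0 < 2 ^ k * R := by positivity
    have hball : (2 ^ (k + 1) * R) ^ s = 2 ^ s * (2 ^ k * R) ^ s := by
      rw [← Real.mul_rpow zero_le_two hrk.le]; ring_nf
    have hcancel : (2 ^ k * R) ^ (-(s + 1)) * (2 ^ k * R) ^ s = (2 ^ k * R)⁻¹ := by
      rw [← Real.rpow_add hrk, show -(s + 1) + s = -1 by ring, Real.rpow_neg_one]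
    have hreal : c k * (G * (2 ^ (k + 1) * R) ^ s) = 2 ^ s * G / R * 2⁻¹ ^ k := by
      calc c k * (G * (2 ^ (k + 1) * R) ^ s)
          = 2 ^ s * G * ((2 ^ k * R) ^ (-(s + 1)) * (2 ^ k * R) ^ s) := by rw [hball]; ring
        _ = 2 ^ s * G / R * 2⁻¹ ^ k := by rw [hcancel, mul_inv, inv_pow]; ring
    calc ENNReal.ofReal (c k) * μ (ball x (2 ^ (k + 1) * R))
        ≤ ENNReal.ofReal (c k) * ENNReal.ofReal (G * (2 ^ (k + 1) * R) ^ s) := by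
          gcongr
          exact (measure_mono ball_subset_closedBall).trans (hG _ (by positivity))
      _ = ENNReal.ofReal (2 ^ s * G / R) * 2⁻¹ ^ k := by
          rw [← ENNReal.ofReal_mul (by positivity), hreal, ENNReal.ofReal_mul (by positivity),
            ENNReal.ofReal_pow (by norm_num), ENNReal.ofReal_inv_of_pos two_pos,
            ENNReal.ofReal_ofNat]
  calc ∫⁻ y in (closedBall x R)ᶜ, ENNReal.ofReal (dist y x ^ (-(s + 1))) ∂μ
      ≤ ∫⁻ y in (closedBall x R)ᶜ,
          ∑' k, (ball x (2 ^ (k + 1) * R)).indicator (fun _ => ENNReal.ofReal (c k)) y ∂μ :=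
        setLIntegral_mono' measurableSet_closedBall.compl hpointwise
    _ ≤ ∫⁻ y, ∑' k, (ball x (2 ^ (k + 1) * R)).indicator (fun _ => ENNReal.ofReal (c k)) y ∂μ :=
        setLIntegral_le_lintegral _ _
    _ = ∑' k, ENNReal.ofReal (c k) * μ (ball x (2 ^ (k + 1) * R)) := by
        rw [lintegral_tsum fun k => (measurable_const.indicator measurableSet_ball).aemeasurable]
        simp only [lintegral_indicator_const measurableSet_ball]
    _ ≤ ∑' k : ℕ, ENNReal.ofReal (2 ^ s * G / R) * 2⁻¹ ^ k := ENNReal.tsum_le_tsum hterm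
    _ = ENNReal.ofReal (2 ^ (s + 1) * G / R) := by
        rw [ENNReal.tsum_mul_left, ENNReal.tsum_geometric, ENNReal.one_sub_inv_two, inv_inv,
          ← ENNReal.ofReal_ofNat 2, ← ENNReal.ofReal_mul (by positivity),
          Real.rpow_add_one two_ne_zero]
        ring_nf

section Potential

variable {E : Type*} [NormedAddCommGroup E] [NormedSpace ℝ E] [MeasurableSpace E] {μ : Measure E}
  {s : ℝ}

lemma measurable_rieszKernel [BorelSpace E] [SecondCountableTopology E] (s : ℝ) :
    Measurable (rieszKernel (E := E) s) :=
  (measurable_norm.pow_const _).smul measurable_id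

lemma ae_norm_rieszKernel_sub_le {S : Set E} (hμS : μ Sᶜ = 0) (hs : 0 ≤ s) {δ : ℝ} (hδ : 0 < δ)
    {w : E} (hw : ∀ y ∈ S, δ ≤ dist w y) :
    ∀ᵐ y ∂μ, ‖rieszKernel s (w - y)‖ ≤ δ ^ (-s) := by
  filter_upwards [measure_eq_zero_iff_ae_notMem.mp hμS] with y hy
  exact norm_rieszKernel_le hs hδ ((hw y (by simpa using hy)).trans_eq (dist_eq_norm w y))

lemma integrable_rieszKernel_sub [BorelSpace E] [SecondCountableTopology E] [IsFiniteMeasure μ]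
    {S : Set E} (hμS : μ Sᶜ = 0) (hs : 0 ≤ s) {δ : ℝ} (hδ : 0 < δ) {w : E}
    (hw : ∀ y ∈ S, δ ≤ dist w y) :
    Integrable (fun y => rieszKernel s (w - y)) μ :=
  (integrable_const (δ ^ (-s))).mono'
    ((measurable_rieszKernel s).comp (measurable_const.sub measurable_id)).aestronglyMeasurable
    (ae_norm_rieszKernel_sub_le hμS hs hδ hw)

lemma norm_setIntegral_rieszKernel_sub_le [IsFiniteMeasure μ] {S : Set E} (hμS : μ Sᶜ = 0)
    (hs : 0 ≤ s) {δ : ℝ} (hδ : 0 < δ) {w : E} (hw : ∀ y ∈ S, δ ≤ dist w y) (A : Set E) :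
    ‖∫ y in A, rieszKernel s (w - y) ∂μ‖ ≤ δ ^ (-s) * μ.real A :=
  norm_setIntegral_le_of_norm_le_const_ae' (measure_lt_top μ A)
    ((ae_norm_rieszKernel_sub_le hμS hs hδ hw).mono fun _ hy _ => hy)

lemma norm_setIntegral_compl_closedBall_rieszKernel_sub_sub_le [OpensMeasurableSpace E]
    (hs : -1 ≤ s) {x x' x'' : E} {ρ R G : ℝ} (hR : 0 < R) (hρR : 2 * ρ ≤ R)
    (hx' : dist x' x ≤ ρ) (hx'' : dist x'' x ≤ ρ) (hG0 : 0 ≤ G)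
    (hG : ∀ r, 0 < r → μ (closedBall x r) ≤ ENNReal.ofReal (G * r ^ s)) :
    ‖∫ y in (closedBall x R)ᶜ, (rieszKernel s (x' - y) - rieszKernel s (x'' - y)) ∂μ‖
      ≤ (s + 2) * (2 * ρ) * 2 ^ (s + 1) * (2 ^ (s + 1) * G / R) := by
  have hconst : 0 ≤ (s + 2) * (2 * ρ) * 2 ^ (s + 1) := by
    have : 0 ≤ ρ := dist_nonneg.trans hx'
    have : 0 ≤ s + 2 := by linarith
    positivity
  -- off the ball, both `x' - y` and `x'' - y` have norm at least `dist y x / 2`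
  have hpointwise : ∀ y ∈ (closedBall x R)ᶜ,
      ‖rieszKernel s (x' - y) - rieszKernel s (x'' - y)‖
        ≤ (s + 2) * (2 * ρ) * 2 ^ (s + 1) * dist y x ^ (-(s + 1)) := by
    intro y hy
    have hyR : R < dist y x := by simpa using hy
    have hfar : ∀ w, dist w x ≤ ρ → dist y x / 2 ≤ ‖w - y‖ := fun w hw => by
      rw [← dist_eq_norm]; linarith [dist_triangle y w x, dist_comm y w]
    have hx'x'' : ‖(x' - y) - (x'' - y)‖ ≤ 2 * ρ := by
      rw [sub_sub_sub_cancel_right, ← dist_eq_norm]; linarith [dist_triangle_right x' x'' x]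
    have hhalf : (dist y x / 2) ^ (-(s + 1)) = 2 ^ (s + 1) * dist y x ^ (-(s + 1)) := by
      rw [Real.div_rpow dist_nonneg zero_le_two, Real.rpow_neg zero_le_two]; field_simp
    calc ‖rieszKernel s (x' - y) - rieszKernel s (x'' - y)‖
        ≤ (s + 2) * ‖(x' - y) - (x'' - y)‖ * (dist y x / 2) ^ (-(s + 1)) :=
          norm_rieszKernel_sub_le hs (by linarith) (hfar x' hx') (hfar x'' hx'')
      _ ≤ (s + 2) * (2 * ρ) * (dist y x / 2) ^ (-(s + 1)) := by
          gcongr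
          linarith
      _ = (s + 2) * (2 * ρ) * 2 ^ (s + 1) * dist y x ^ (-(s + 1)) := by rw [hhalf]; ring
  refine (norm_integral_le_lintegral_norm _).trans (ENNReal.toReal_le_of_le_ofReal
    (by positivity) ?_)
  calc ∫⁻ y in (closedBall x R)ᶜ,
        ENNReal.ofReal ‖rieszKernel s (x' - y) - rieszKernel s (x'' - y)‖ ∂μ
      ≤ ∫⁻ y in (closedBall x R)ᶜ, ENNReal.ofReal ((s + 2) * (2 * ρ) * 2 ^ (s + 1))
          * ENNReal.ofReal (dist y x ^ (-(s + 1))) ∂μ :=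
        setLIntegral_mono' measurableSet_closedBall.compl fun y hy => by
          rw [← ENNReal.ofReal_mul hconst]; exact ENNReal.ofReal_le_ofReal (hpointwise y hy)
    _ ≤ ENNReal.ofReal ((s + 2) * (2 * ρ) * 2 ^ (s + 1))
          * ENNReal.ofReal (2 ^ (s + 1) * G / R) := by
        rw [lintegral_const_mul' _ _ ENNReal.ofReal_ne_top]
        gcongr
        exact lintegral_compl_closedBall_dist_rpow_le hs hG0 hR hG
    _ = ENNReal.ofReal ((s + 2) * (2 * ρ) * 2 ^ (s + 1) * (2 ^ (s + 1) * G / R)) :=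
        (ENNReal.ofReal_mul hconst).symm

lemma norm_integral_rieszKernel_sub_sub_le [BorelSpace E] [SecondCountableTopology E]
    [IsFiniteMeasure μ] {S : Set E} (hμS : μ Sᶜ = 0) (hs : 0 ≤ s) {x x' x'' : E}
    {ρ δ R G : ℝ} (hδ : 0 < δ) (hR : 0 < R) (hρR : 2 * ρ ≤ R) (hx' : dist x' x ≤ ρ)
    (hx'' : dist x'' x ≤ ρ) (hx'S : ∀ y ∈ S, δ ≤ dist x' y) (hx''S : ∀ y ∈ S, δ ≤ dist x'' y)
    (hG0 : 0 ≤ G) (hG : ∀ r, 0 < r → μ (closedBall x r) ≤ ENNReal.ofReal (G * r ^ s)) :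
    ‖∫ y, rieszKernel s (x' - y) ∂μ - ∫ y, rieszKernel s (x'' - y) ∂μ‖
      ≤ 2 * δ ^ (-s) * μ.real (closedBall x R)
        + (s + 2) * (2 * ρ) * 2 ^ (s + 1) * (2 ^ (s + 1) * G / R) := by
  set A := closedBall x R
  have hint' := integrable_rieszKernel_sub hμS hs hδ hx'S
  have hint'' := integrable_rieszKernel_sub hμS hs hδ hx''S
  have hsplit : ∫ y, rieszKernel s (x' - y) ∂μ - ∫ y, rieszKernel s (x'' - y) ∂μ
      = (∫ y in A, rieszKernel s (x' - y) ∂μ - ∫ y in A, rieszKernel s (x'' - y) ∂μ)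
        + ∫ y in Aᶜ, (rieszKernel s (x' - y) - rieszKernel s (x'' - y)) ∂μ := by
    rw [← integral_add_compl measurableSet_closedBall hint',
      ← integral_add_compl measurableSet_closedBall hint'',
      integral_sub hint'.integrableOn hint''.integrableOn]
    abel
  rw [hsplit]
  refine (norm_add_le _ _).trans (add_le_add ((norm_sub_le _ _).trans ?_)
    (norm_setIntegral_compl_closedBall_rieszKernel_sub_sub_le (by linarith) hR hρR hx' hx''
      hG0 hG))
  linarith [norm_setIntegral_rieszKernel_sub_le hμS hs hδ hx'S A,
    norm_setIntegral_rieszKernel_sub_le hμS hs hδ hx''S A]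

end Potential

/-- Oscillation bound. Let `ν = νp - νm` be a finite signed measure on `ℝ²`
supported on `sν`, let `B = D(x,ρ)` and `Ω ⊆ B` with `dist(Ω, supp ν) ≥ ε ρ`, `0 < ε < 1`.
Then for `M ≥ 6`, `s ∈ (1,2)`, and any `G` with `|ν|(D(x,r)) ≤ G r^s` for all `r > 0`,
`osc_Ω Rν ≤ 2/(ερ)^s · |ν|((M/3)B) + (C/M) · G`, where `C = C(s)`. -/
theorem stmt10 (s : ℝ) (hs : 1 < s ∧ s < 2) :
    ∃ C > 0, ∀ (νp νm : Measure (EuclideanSpace ℝ (Fin 2))),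
      IsFiniteMeasure νp → IsFiniteMeasure νm →
      ∀ (sν Ω : Set (EuclideanSpace ℝ (Fin 2))) (x : EuclideanSpace ℝ (Fin 2)) (ρ ε M G : ℝ),
      0 < ρ → 0 < ε → ε < 1 → 6 ≤ M →
      νp sνᶜ = 0 → νm sνᶜ = 0 →
      Ω ⊆ Metric.closedBall x ρ →
      (∀ y' ∈ Ω, ∀ y ∈ sν, ε * ρ ≤ dist y' y) →
      (∀ r : ℝ, 0 < r → ((νp + νm) (Metric.closedBall x r)).toReal ≤ G * r ^ s) →
      ∀ x' ∈ Ω, ∀ x'' ∈ Ω,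
        ‖((∫ y, ‖x' - y‖ ^ (-(s + 1)) • (x' - y) ∂νp)
            - ∫ y, ‖x' - y‖ ^ (-(s + 1)) • (x' - y) ∂νm)
          - ((∫ y, ‖x'' - y‖ ^ (-(s + 1)) • (x'' - y) ∂νp)
            - ∫ y, ‖x'' - y‖ ^ (-(s + 1)) • (x'' - y) ∂νm)‖
          ≤ 2 / (ε * ρ) ^ s * ((νp + νm) (Metric.closedBall x (M / 3 * ρ))).toReal
            + C / M * G := by
  have hs0 : 0 ≤ s := by linarith [hs.1]
  refine ⟨12 * (s + 2) * 2 ^ (s + 1) * 2 ^ (s + 1), by positivity, ?_⟩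
  intro νp νm _ _ sν Ω x ρ ε M G hρ hε _ hM hνp hνm hΩ hdist hG x' hx' x'' hx''
  have hG0 : 0 ≤ G := by simpa using ENNReal.toReal_nonneg.trans (hG 1 one_pos)
  have hgrowth : ∀ μ ≤ νp + νm, ∀ r, 0 < r → μ (closedBall x r) ≤ ENNReal.ofReal (G * r ^ s) :=
    fun μ hμ r hr => (hμ _).trans
      ((ENNReal.le_ofReal_iff_toReal_le (measure_ne_top _ _)
        (mul_nonneg hG0 (Real.rpow_nonneg hr.le _))).mpr (hG r hr))
  have hosc : ∀ μ ≤ νp + νm, μ sνᶜ = 0 → [IsFiniteMeasure μ] →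
      ‖∫ y, rieszKernel s (x' - y) ∂μ - ∫ y, rieszKernel s (x'' - y) ∂μ‖
        ≤ 2 * (ε * ρ) ^ (-s) * μ.real (closedBall x (M / 3 * ρ))
          + (s + 2) * (2 * ρ) * 2 ^ (s + 1) * (2 ^ (s + 1) * G / (M / 3 * ρ)) :=
    fun μ hμ hμS _ => norm_integral_rieszKernel_sub_sub_le hμS hs0 (by positivity)
      (by positivity) (by nlinarith) (hΩ hx') (hΩ hx'') (hdist x' hx') (hdist x'' hx'') hG0
      (hgrowth μ hμ)
  have hoscp := hosc νp (Measure.le_add_right le_rfl) hνp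
  have hoscm := hosc νm (Measure.le_add_left le_rfl) hνm
  rw [← dist_eq_norm]
  refine (dist_sub_sub_le _ _ _ _).trans ?_
  rw [dist_eq_norm, dist_eq_norm, ← measureReal_def, measureReal_add_apply]
  refine (add_le_add hoscp hoscm).trans_eq ?_
  rw [Real.rpow_neg (by positivity)]
  field_simp
  ring
end

section
/- Let s ∈ (1,2) and let ν be a finite positive compactly supported measure on ℝ² with C^∞ density with respect to Lebesgue measure m₂, and g : ℝ² → ℝ² a C^∞ vector field. Suppose the maximum principle holds for smooth adjoint Riesz potentials: whenever η is a vector-valued measure with compactly supported C^∞ density and max_{ℝ²} R*η > 0, then max_{ℝ²} R*η = max_{supp η} R*η. Then for V(x) = v(|x|) with v convex increasing, v(0)=0: if max_{ℝ²}[V(Rν) + R*(gν)] > 0, then max_{ℝ²}[V(Rν) + R*(gν)] = max_{supp ν}[V(Rν) + R*(gν)]. -/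
open MeasureTheory

/-- The `s`-Riesz transform of the measure with density `f` w.r.t. planar Lebesgue measure. -/
noncomputable def RieszT (s : ℝ) (f : EuclideanSpace ℝ (Fin 2) → ℝ)
    (x : EuclideanSpace ℝ (Fin 2)) : EuclideanSpace ℝ (Fin 2) :=
  ∫ y, (f y * ‖x - y‖ ^ (-(s + 1))) • (x - y) ∂(volume : Measure (EuclideanSpace ℝ (Fin 2)))

/-- The adjoint `s`-Riesz transform `R^*(h m₂)(x) = -∫ ⟨x - y, h y⟩ / ‖x - y‖^{s+1} dm₂(y)`. -/
noncomputable def RieszTStar (s : ℝ) (h : EuclideanSpace ℝ (Fin 2) → EuclideanSpace ℝ (Fin 2))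
    (x : EuclideanSpace ℝ (Fin 2)) : ℝ :=
  -∫ y, (inner ℝ (x - y) (h y) : ℝ) / ‖x - y‖ ^ (s + 1)
      ∂(volume : Measure (EuclideanSpace ℝ (Fin 2)))

open MeasureTheory Metric Set Filter

local notation "E2" => EuclideanSpace ℝ (Fin 2)

lemma integrableOn_riesz_kernel {s : ℝ} (hs0 : 0 < s) (hs2 : s < 2)
    (x : E2) (R : ℝ) :
    IntegrableOn (fun y : E2 => ‖x - y‖ ^ (-s)) (closedBall x R) volume := by
  have hmeas : Measurable (fun y : E2 => ‖x - y‖ ^ (-s)) := by fun_prop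
  refine ⟨hmeas.aestronglyMeasurable, ?_⟩
  rw [hasFiniteIntegral_iff_ofReal (Eventually.of_forall fun y =>
    Real.rpow_nonneg (norm_nonneg _) _)]
  rw [lintegral_eq_lintegral_meas_le _ (Eventually.of_forall fun y =>
    Real.rpow_nonneg (norm_nonneg _) _) hmeas.aemeasurable]
  set μ := volume.restrict (closedBall x R)
  -- bound the superlevel sets
  have hsub : ∀ t : ℝ, 0 < t → {a : E2 | t ≤ ‖x - a‖ ^ (-s)} ⊆ closedBall x (t ^ (-s⁻¹)) := by
    intro t ht a ha
    simp only [mem_setOf_eq] at ha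
    have hna : (0:ℝ) < ‖x - a‖ := by
      rcases eq_or_lt_of_le (norm_nonneg (x - a)) with h | h
      · exfalso; rw [← h, Real.zero_rpow (neg_ne_zero.mpr hs0.ne')] at ha; linarith
      · exact h
    have h1 : ‖x - a‖ ^ s ≤ t⁻¹ := by
      have : t ≤ (‖x - a‖ ^ s)⁻¹ := by rwa [Real.rpow_neg hna.le] at ha
      have hps : (0:ℝ) < ‖x - a‖ ^ s := Real.rpow_pos_of_pos hna s
      rw [le_inv_comm₀ ht hps] at this
      exact this
    have h2 : (‖x - a‖ ^ s) ^ (s⁻¹) ≤ (t⁻¹) ^ (s⁻¹) :=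
      Real.rpow_le_rpow (by positivity) h1 (by positivity)
    rw [mem_closedBall, dist_eq_norm, norm_sub_rev]
    calc ‖x - a‖ = (‖x - a‖ ^ s) ^ (s⁻¹) := by
          rw [← Real.rpow_mul hna.le, mul_inv_cancel₀ hs0.ne', Real.rpow_one]
      _ ≤ (t⁻¹) ^ (s⁻¹) := Real.rpow_le_rpow (by positivity) h1 (by positivity)
      _ = t ^ (-s⁻¹) := by rw [← Real.rpow_neg_one, ← Real.rpow_mul ht.le]; ring_nf
  have hres : ∀ S : Set E2, μ S ≤ volume S := fun S => Measure.restrict_le_self S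
  have hC : volume (closedBall x R) < ⊤ := measure_closedBall_lt_top
  have hfr : Module.finrank ℝ E2 = 2 := by
    simp [finrank_euclideanSpace]
  set vB := volume (ball (0:E2) 1) with hvB
  have hvBlt : vB < ⊤ := measure_ball_lt_top
  calc ∫⁻ t in Ioi (0:ℝ), μ {a : E2 | t ≤ ‖x - a‖ ^ (-s)}
      ≤ ∫⁻ t in Ioc (0:ℝ) 1 ∪ Ioi 1, μ {a : E2 | t ≤ ‖x - a‖ ^ (-s)} :=
        lintegral_mono_set Ioi_subset_Ioc_union_Ioi
    _ ≤ (∫⁻ t in Ioc (0:ℝ) 1, μ {a : E2 | t ≤ ‖x - a‖ ^ (-s)})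
        + ∫⁻ t in Ioi (1:ℝ), μ {a : E2 | t ≤ ‖x - a‖ ^ (-s)} := lintegral_union_le _ _ _
    _ < ⊤ := by
        refine ENNReal.add_lt_top.2 ⟨?_, ?_⟩
        · calc ∫⁻ t in Ioc (0:ℝ) 1, μ {a : E2 | t ≤ ‖x - a‖ ^ (-s)}
              ≤ ∫⁻ _ in Ioc (0:ℝ) 1, volume (closedBall x R) := by
                refine lintegral_mono fun t => ?_
                exact (measure_mono (subset_univ _)).trans
                  (le_of_eq (Measure.restrict_apply_univ _))
            _ = volume (closedBall x R) * volume (Ioc (0:ℝ) 1) := setLIntegral_const _ _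
            _ < ⊤ := ENNReal.mul_lt_top hC (by simp [Real.volume_Ioc])
        · calc ∫⁻ t in Ioi (1:ℝ), μ {a : E2 | t ≤ ‖x - a‖ ^ (-s)}
              ≤ ∫⁻ t in Ioi (1:ℝ), ENNReal.ofReal (t ^ (-s⁻¹ * 2)) * vB := by
                refine setLIntegral_mono' measurableSet_Ioi fun t ht => ?_
                have ht1 : (1:ℝ) < t := ht
                have ht0 : (0:ℝ) < t := lt_trans one_pos ht1
                refine le_trans (hres _) (le_trans (measure_mono (hsub t ht0)) ?_)
                rw [Measure.addHaar_closedBall (volume : Measure E2) x (by positivity : (0:ℝ) ≤ t ^ (-s⁻¹)), hfr]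
                apply le_of_eq
                congr 1
                rw [← Real.rpow_natCast (t ^ (-s⁻¹)) 2, ← Real.rpow_mul ht0.le]
                norm_num
            _ = (∫⁻ t in Ioi (1:ℝ), ENNReal.ofReal (t ^ (-s⁻¹ * 2))) * vB :=
                lintegral_mul_const' _ _ hvBlt.ne
            _ < ⊤ := by
                refine ENNReal.mul_lt_top ?_ hvBlt
                refine IntegrableOn.setLIntegral_lt_top ?_
                refine integrableOn_Ioi_rpow_of_lt ?_ one_pos
                have h2s : 1 < 2 / s := (one_lt_div hs0).mpr hs2
                rw [neg_mul]
                rw [inv_mul_eq_div]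
                linarith

lemma ker_mul {s : ℝ} (hs0 : 0 < s) (r : ℝ) (hr : 0 ≤ r) :
    r ^ (-(s+1)) * r = r ^ (-s) := by
  rcases hr.eq_or_lt with h | h
  · rw [← h, Real.zero_rpow (by linarith : -(s+1) ≠ 0), Real.zero_rpow (by linarith : -s ≠ 0),
      mul_zero]
  · rw [← Real.rpow_add_one h.ne' (-(s+1))]
    ring_nf

lemma integrable_rieszT_integrand {s : ℝ} (hs0 : 0 < s) (hs2 : s < 2)
    {f : E2 → ℝ} (hf : Continuous f) (hfc : HasCompactSupport f) (x : E2) :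
    Integrable (fun y => (f y * ‖x - y‖ ^ (-(s + 1))) • (x - y))
      (volume : Measure E2) := by
  obtain ⟨C, hC⟩ := hf.bounded_above_of_compact_support hfc
  have hC0 : 0 ≤ C := le_trans (norm_nonneg _) (hC x)
  obtain ⟨R, hR⟩ := hfc.isBounded.subset_closedBall x
  have hsupp : Function.support (fun y : E2 => (f y * ‖x - y‖ ^ (-(s + 1))) • (x - y))
      ⊆ closedBall x R := by
    intro y hy
    refine hR (subset_tsupport f ?_)
    intro h0
    simp [Function.mem_support, h0] at hy
  rw [← integrableOn_iff_integrable_of_support_subset hsupp]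
  refine Integrable.mono' ((integrableOn_riesz_kernel hs0 hs2 x R).const_mul C) ?_ ?_
  · exact (Measurable.aestronglyMeasurable (by fun_prop)).restrict
  · refine Eventually.of_forall fun y => ?_
    rw [norm_smul]
    have h1 : ‖f y * ‖x - y‖ ^ (-(s + 1))‖ = ‖f y‖ * ‖x - y‖ ^ (-(s + 1)) := by
      rw [norm_mul, Real.norm_eq_abs (‖x - y‖ ^ _),
        abs_of_nonneg (Real.rpow_nonneg (norm_nonneg _) _)]
    rw [h1, mul_assoc, ker_mul hs0 _ (norm_nonneg _)]
    exact mul_le_mul_of_nonneg_right (hC y) (Real.rpow_nonneg (norm_nonneg _) _)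

lemma integrable_rieszTStar_integrand {s : ℝ} (hs0 : 0 < s) (hs2 : s < 2)
    {φ : E2 → E2} (hφ : Continuous φ) (hφc : HasCompactSupport φ) (x : E2) :
    Integrable (fun y => (inner ℝ (x - y) (φ y) : ℝ) / ‖x - y‖ ^ (s + 1))
      (volume : Measure E2) := by
  obtain ⟨C, hC⟩ := hφ.bounded_above_of_compact_support hφc
  have hC0 : 0 ≤ C := le_trans (norm_nonneg _) (hC x)
  obtain ⟨R, hR⟩ := hφc.isBounded.subset_closedBall x
  have hsupp : Function.support (fun y : E2 => (inner ℝ (x - y) (φ y) : ℝ) / ‖x - y‖ ^ (s + 1))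
      ⊆ closedBall x R := by
    intro y hy
    refine hR (subset_tsupport φ ?_)
    intro h0
    simp [Function.mem_support, h0] at hy
  rw [← integrableOn_iff_integrable_of_support_subset hsupp]
  refine Integrable.mono' ((integrableOn_riesz_kernel hs0 hs2 x R).const_mul C) ?_ ?_
  · refine (Measurable.aestronglyMeasurable ?_).restrict
    have h1 : Continuous fun y : E2 => (inner ℝ (x - y) (φ y) : ℝ) :=
      (continuous_const.sub continuous_id).inner hφ
    exact h1.measurable.div (by fun_prop)
  · refine Eventually.of_forall fun y => ?_
    rw [norm_div, Real.norm_eq_abs (‖x - y‖ ^ _),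
      abs_of_nonneg (Real.rpow_nonneg (norm_nonneg _) _), div_eq_mul_inv,
      ← Real.rpow_neg (norm_nonneg _)]
    calc ‖(inner ℝ (x - y) (φ y) : ℝ)‖ * ‖x - y‖ ^ (-(s+1))
        ≤ (‖x - y‖ * C) * ‖x - y‖ ^ (-(s+1)) := by
          refine mul_le_mul_of_nonneg_right ?_ (Real.rpow_nonneg (norm_nonneg _) _)
          exact le_trans (norm_inner_le_norm _ _)
            (mul_le_mul_of_nonneg_left (hC y) (norm_nonneg _))
      _ = C * (‖x - y‖ ^ (-(s+1)) * ‖x - y‖) := by ring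
      _ = C * ‖x - y‖ ^ (-s) := by rw [ker_mul hs0 _ (norm_nonneg _)]

lemma rieszTStar_shift {s : ℝ} (hs0 : 0 < s) (hs2 : s < 2)
    {f : E2 → ℝ} (hf : Continuous f) (hfc : HasCompactSupport f)
    {g : E2 → E2} (hg : Continuous g) (w : E2) (x : E2) :
    RieszTStar s (fun y => f y • (g y - w)) x
      = RieszTStar s (fun y => f y • g y) x + (inner ℝ (RieszT s f x) w : ℝ) := by
  have hfgc : HasCompactSupport (fun y => f y • g y) :=
    hfc.mono (fun y hy => by
      simp only [Function.mem_support] at hy ⊢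
      intro h0; exact hy (by rw [h0, zero_smul]))
  have hfwc : HasCompactSupport (fun y => f y • w) :=
    hfc.mono (fun y hy => by
      simp only [Function.mem_support] at hy ⊢
      intro h0; exact hy (by rw [h0, zero_smul]))
  have h3 : Integrable (fun y => (inner ℝ (x - y) (f y • g y) : ℝ) / ‖x - y‖ ^ (s + 1)) volume :=
    integrable_rieszTStar_integrand hs0 hs2 (hf.smul hg) hfgc x
  have h4 : Integrable (fun y => (inner ℝ (x - y) (f y • w) : ℝ) / ‖x - y‖ ^ (s + 1)) volume :=
    integrable_rieszTStar_integrand hs0 hs2 (hf.smul continuous_const) hfwc x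
  have hpt : ∀ y : E2, (inner ℝ (x - y) (f y • (g y - w)) : ℝ) / ‖x - y‖ ^ (s + 1)
      = (inner ℝ (x - y) (f y • g y) : ℝ) / ‖x - y‖ ^ (s + 1)
        - (inner ℝ (x - y) (f y • w) : ℝ) / ‖x - y‖ ^ (s + 1) := by
    intro y
    rw [smul_sub, inner_sub_right, sub_div]
  have hIB : ∫ y, (inner ℝ (x - y) (f y • w) : ℝ) / ‖x - y‖ ^ (s + 1)
      ∂(volume : Measure E2) = (inner ℝ (RieszT s f x) w : ℝ) := by
    have hpt2 : ∀ y : E2, (inner ℝ (x - y) (f y • w) : ℝ) / ‖x - y‖ ^ (s + 1)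
        = (inner ℝ w ((f y * ‖x - y‖ ^ (-(s + 1))) • (x - y)) : ℝ) := by
      intro y
      rw [real_inner_smul_right, real_inner_smul_right, real_inner_comm w (x - y),
        div_eq_mul_inv, ← Real.rpow_neg (norm_nonneg _)]
      ring
    rw [funext hpt2, integral_inner (integrable_rieszT_integrand hs0 hs2 hf hfc x) w,
      RieszT, real_inner_comm]
  rw [RieszTStar, RieszTStar, funext hpt,
    integral_sub h3 h4, hIB]
  ring

lemma exists_support_slope {v : ℝ → ℝ} (hconv : ConvexOn ℝ (Set.Ici 0) v)
    (hmono : MonotoneOn v (Set.Ici 0)) (h0 : v 0 = 0) {t0 : ℝ} (ht0 : 0 ≤ t0) :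
    ∃ τ : ℝ, 0 ≤ τ ∧ ∀ t, 0 ≤ t → v t0 + τ * (t - t0) ≤ v t := by
  rcases ht0.eq_or_lt with h | h
  · refine ⟨0, le_refl _, fun t ht => ?_⟩
    rw [← h]
    simpa [h0] using hmono (le_refl (0:ℝ)) ht ht
  · set S : Set ℝ := (fun t => (v t0 - v t) / (t0 - t)) '' Set.Ico 0 t0 with hS
    have hSne : S.Nonempty := ⟨_, ⟨0, ⟨le_refl _, h⟩, rfl⟩⟩
    have hSbdd : BddAbove S := by
      refine ⟨(v (t0 + 1) - v t0) / (t0 + 1 - t0), fun b hb => ?_⟩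
      obtain ⟨t, ht, rfl⟩ := hb
      have := hconv.slope_mono_adjacent (ht.1 : (0:ℝ) ≤ t)
        (by positivity : (0:ℝ) ≤ t0 + 1) ht.2 (by linarith)
      exact this
    refine ⟨sSup S, ?_, ?_⟩
    · have h1 : (v t0 - v 0) / (t0 - 0) ∈ S := ⟨0, ⟨le_refl _, h⟩, rfl⟩
      refine le_trans ?_ (le_csSup hSbdd h1)
      rw [h0, sub_zero, sub_zero]
      have hv0 : 0 ≤ v t0 := by simpa [h0] using hmono (le_refl (0:ℝ)) ht0 ht0
      positivity
    · intro t ht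
      rcases lt_trichotomy t t0 with hlt | heq | hgt
      · have h1 : (v t0 - v t) / (t0 - t) ≤ sSup S := le_csSup hSbdd ⟨t, ⟨ht, hlt⟩, rfl⟩
        rw [div_le_iff₀ (by linarith)] at h1
        nlinarith
      · rw [heq]; simp
      · have h1 : sSup S ≤ (v t - v t0) / (t - t0) := by
          refine csSup_le hSne fun b hb => ?_
          obtain ⟨t', ht', rfl⟩ := hb
          exact hconv.slope_mono_adjacent (ht'.1 : (0:ℝ) ≤ t') ht ht'.2 hgt
        rw [le_div_iff₀ (by linarith)] at h1
        nlinarith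

/-- Generalized maximum principle. Let `s ∈ (1,2)`, `ν = f m₂` a finite positive
measure with compactly supported `C^∞` density, `g` a `C^∞` vector field, and suppose the
maximum principle holds for smooth adjoint Riesz potentials: whenever `η = h m₂` has
compactly supported `C^∞` density and `max R^*η > 0`, then `max_{ℝ²} R^*η = max_{supp η} R^*η`.
Then for `V x = v ‖x‖` with `v` convex increasing, `v 0 = 0`: if
`max [V(Rν) + R^*(gν)] > 0`, then it is attained (as a supremum) on `supp ν`. -/
theorem stmt15 (s : ℝ) (hs : 1 < s ∧ s < 2)
    (v : ℝ → ℝ) (hconv : ConvexOn ℝ (Set.Ici 0) v) (hmono : MonotoneOn v (Set.Ici 0))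
    (h0 : v 0 = 0)
    (f : EuclideanSpace ℝ (Fin 2) → ℝ) (hf : ContDiff ℝ (⊤ : ℕ∞) f) (hfc : HasCompactSupport f)
    (hf0 : ∀ x, 0 ≤ f x)
    (g : EuclideanSpace ℝ (Fin 2) → EuclideanSpace ℝ (Fin 2)) (hg : ContDiff ℝ (⊤ : ℕ∞) g)
    (hmaxprin : ∀ h : EuclideanSpace ℝ (Fin 2) → EuclideanSpace ℝ (Fin 2),
      ContDiff ℝ (⊤ : ℕ∞) h → HasCompactSupport h →
      0 < sSup (Set.range (RieszTStar s h)) →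
      sSup (Set.range (RieszTStar s h)) = sSup (RieszTStar s h '' tsupport h)) :
    0 < sSup (Set.range (fun x => v ‖RieszT s f x‖ + RieszTStar s (fun y => f y • g y) x)) →
    sSup (Set.range (fun x => v ‖RieszT s f x‖ + RieszTStar s (fun y => f y • g y) x))
      = sSup ((fun x => v ‖RieszT s f x‖ + RieszTStar s (fun y => f y • g y) x) ''
          tsupport f) := by
  intro hpos
  obtain ⟨hs1, hs2⟩ := hs
  have hs0 : 0 < s := lt_trans one_pos hs1
  have hfcont : Continuous f := hf.continuous
  have hgcont : Continuous g := hg.continuous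
  set F : E2 → ℝ := fun x => v ‖RieszT s f x‖ + RieszTStar s (fun y => f y • g y) x with hF
  have hbdd : BddAbove (Set.range F) := by
    by_contra hb
    rw [Real.sSup_of_not_bddAbove hb] at hpos
    exact lt_irrefl _ hpos
  have hKne : (tsupport f).Nonempty := by
    by_contra hK
    rw [Set.not_nonempty_iff_eq_empty] at hK
    have hfz : ∀ y, f y = 0 := fun y => image_eq_zero_of_notMem_tsupport (by simp [hK])
    have hFz : ∀ x, F x = 0 := by
      intro x
      have h1 : RieszT s f x = 0 := by
        rw [RieszT]
        simp [hfz]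
      have h2 : RieszTStar s (fun y => f y • g y) x = 0 := by
        rw [RieszTStar]
        simp [hfz]
      simp [hF, h1, h2, h0]
    have hrange : Set.range F = {0} := by
      ext b; simp [hFz, eq_comm]
    rw [hrange, csSup_singleton] at hpos
    exact lt_irrefl _ hpos
  have hclaim : ∀ x0, 0 < F x0 → F x0 ≤ sSup (F '' tsupport f) := by
    intro x0 hx0
    classical
    obtain ⟨τ, hτ0, hsl⟩ := exists_support_slope hconv hmono h0 (norm_nonneg (RieszT s f x0))
    set t0 : ℝ := ‖RieszT s f x0‖ with ht0def
    set w : E2 := if RieszT s f x0 = 0 then 0 else (τ / t0) • RieszT s f x0 with hw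
    have hwn : ‖w‖ ≤ τ := by
      rw [hw]; split_ifs with hcase
      · simpa using hτ0
      · have htpos : 0 < t0 := norm_pos_iff.mpr hcase
        rw [norm_smul, Real.norm_eq_abs, abs_of_nonneg (by positivity), ← ht0def,
          div_mul_cancel₀ _ htpos.ne']
    have hwin : (inner ℝ (RieszT s f x0) w : ℝ) = τ * t0 := by
      rw [hw]; split_ifs with hcase
      · simp [hcase, ht0def]
      · have htpos : 0 < t0 := norm_pos_iff.mpr hcase
        rw [real_inner_smul_right, real_inner_self_eq_norm_mul_norm, ← ht0def]
        field_simp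
    set h : E2 → E2 := fun y => f y • (g y - w) with hh
    have hhsmooth : ContDiff ℝ (⊤ : ℕ∞) h := hf.smul (hg.sub contDiff_const)
    have hhc : HasCompactSupport h := hfc.mono (fun y hy => by
      simp only [Function.mem_support] at hy ⊢
      intro h0'
      exact hy (by simp [hh, h0']))
    have hiden : ∀ x, RieszTStar s h x
        = RieszTStar s (fun y => f y • g y) x + (inner ℝ (RieszT s f x) w : ℝ) :=
      fun x => rieszTStar_shift hs0 hs2 hfcont hfc hgcont w x
    set c : ℝ := v t0 - τ * t0 with hc
    have hcle : c ≤ 0 := by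
      have := hsl 0 le_rfl
      rw [h0] at this
      simp only [hc]
      linarith
    have hub : ∀ x, RieszTStar s h x ≤ F x - c := by
      intro x
      rw [hiden x]
      have h1 : (inner ℝ (RieszT s f x) w : ℝ) ≤ τ * ‖RieszT s f x‖ :=
        calc (inner ℝ (RieszT s f x) w : ℝ) ≤ ‖RieszT s f x‖ * ‖w‖ := real_inner_le_norm _ _
          _ ≤ ‖RieszT s f x‖ * τ := mul_le_mul_of_nonneg_left hwn (norm_nonneg _)
          _ = τ * ‖RieszT s f x‖ := mul_comm _ _
      have h2 := hsl ‖RieszT s f x‖ (norm_nonneg _)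
      simp only [hF, hc]
      linarith
    have hx0eq : RieszTStar s h x0 = F x0 - c := by
      rw [hiden x0, hwin]
      simp only [hF, hc, ← ht0def]
      ring
    have hbddh : BddAbove (Set.range (RieszTStar s h)) := by
      refine ⟨sSup (Set.range F) - c, ?_⟩
      rintro _ ⟨x, rfl⟩
      have := le_csSup hbdd (Set.mem_range_self (f := F) x)
      have := hub x
      linarith
    have hhpos : 0 < sSup (Set.range (RieszTStar s h)) := by
      refine lt_of_lt_of_le ?_ (le_csSup hbddh (Set.mem_range_self x0))
      rw [hx0eq]
      linarith
    have hmp := hmaxprin h hhsmooth hhc hhpos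
    have htsne : (tsupport h).Nonempty := by
      by_contra hK
      rw [Set.not_nonempty_iff_eq_empty] at hK
      have hhz : ∀ y, h y = 0 := fun y => image_eq_zero_of_notMem_tsupport (by simp [hK])
      have hRz : ∀ x, RieszTStar s h x = 0 := by
        intro x; rw [RieszTStar]; simp [hhz]
      have hrange : Set.range (RieszTStar s h) = {0} := by
        ext b; simp [hRz, eq_comm]
      rw [hrange, csSup_singleton] at hhpos
      exact lt_irrefl _ hhpos
    have hKbdd : BddAbove (F '' tsupport f) := hbdd.mono (Set.image_subset_range F _)
    have himg : sSup (RieszTStar s h '' tsupport h) ≤ sSup (F '' tsupport f) - c := by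
      refine csSup_le (htsne.image _) ?_
      rintro b ⟨z, hz, rfl⟩
      have hzK : z ∈ tsupport f := by
        refine closure_mono ?_ hz
        intro y hy
        simp only [Function.mem_support] at hy ⊢
        intro h0'
        exact hy (by simp [hh, h0'])
      have hFz : F z ≤ sSup (F '' tsupport f) := le_csSup hKbdd ⟨z, hzK, rfl⟩
      have := hub z
      linarith
    have hfin : F x0 - c ≤ sSup (F '' tsupport f) - c := by
      calc F x0 - c = RieszTStar s h x0 := hx0eq.symm
        _ ≤ sSup (Set.range (RieszTStar s h)) := le_csSup hbddh (Set.mem_range_self x0)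
        _ = sSup (RieszTStar s h '' tsupport h) := hmp
        _ ≤ sSup (F '' tsupport f) - c := himg
    linarith
  obtain ⟨a, ⟨x1, rfl⟩, hx1pos⟩ := exists_lt_of_lt_csSup (Set.range_nonempty F) hpos
  have hKpos : 0 < sSup (F '' tsupport f) := lt_of_lt_of_le hx1pos (hclaim x1 hx1pos)
  refine le_antisymm ?_ (csSup_le_csSup hbdd (hKne.image F) (Set.image_subset_range F _))
  refine csSup_le (Set.range_nonempty F) ?_
  rintro b ⟨x, rfl⟩
  rcases le_or_gt (F x) 0 with hx | hx
  · linarith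
  · exact hclaim x hx
end
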